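/- For d ≥ 3 and t ∈ (0, 1/√(d-1)), with u=(1,t), v=(1,-t), the limit as t → 0⁺ of ((√(d-1)+t)^d - (√(d-1)-t)^d)²/(d^d(2(1+t²)^d - 2(1-t²)^d)) equals (1-1/d)^{d-1}. -/

import Mathlib

/-! Numerator and denominator are both odd differences `(a + s) ^ n - (a - s) ^ n`, whose
linear term is `2 n a ^ (n - 1) s`. With `a = √(d - 1)`, `s = t` upstairs and `a = 1`, `s = t ^ 2`
downstairs, the ratio tends to `(2 d (d - 1) ^ ((d - 1) / 2)) ^ 2 / (d ^ d · 4 d) = (1 - 1 / d) ^ (d - 1)`. -/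

open Filter Topology

section NormedField

variable {𝕜 : Type*} [NontriviallyNormedField 𝕜]

theorem hasDerivAt_add_pow_sub_sub_pow (a : 𝕜) (n : ℕ) :
    HasDerivAt (fun t => (a + t) ^ n - (a - t) ^ n) (2 * n * a ^ (n - 1)) 0 := by
  have h := (((hasDerivAt_id 0).const_add a).pow n).sub (((hasDerivAt_id 0).const_sub a).pow n)
  exact h.congr_deriv (by simp only [id, add_zero, sub_zero]; ring)

theorem tendsto_add_pow_sub_sub_pow_div (a : 𝕜) (n : ℕ) :
    Tendsto (fun t => ((a + t) ^ n - (a - t) ^ n) / t) (𝓝[≠] 0) (𝓝 (2 * n * a ^ (n - 1))) := by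
  refine (hasDerivAt_iff_tendsto_slope.mp (hasDerivAt_add_pow_sub_sub_pow a n)).congr fun t => ?_
  simp [slope_def_field]

theorem tendsto_pow_nhdsNE_zero {n : ℕ} (hn : n ≠ 0) :
    Tendsto (fun t : 𝕜 => t ^ n) (𝓝[≠] 0) (𝓝[≠] 0) :=
  tendsto_nhdsWithin_of_tendsto_nhds_of_eventually_within _
    (((continuous_pow n).tendsto' 0 0 (zero_pow hn)).mono_left nhdsWithin_le_nhds)
    (eventually_nhdsWithin_of_forall fun _ ht => pow_ne_zero n ht)

end NormedField

theorem sq_two_mul_sqrt_sub_one_pow_div (d : ℕ) (hd : 1 ≤ d) :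
    (2 * d * √((d : ℝ) - 1) ^ (d - 1)) ^ 2 / ((d : ℝ) ^ d * (2 * (2 * d)))
      = (1 - 1 / (d : ℝ)) ^ (d - 1) := by
  obtain ⟨k, rfl⟩ := Nat.exists_eq_add_of_le' hd
  have hk : (k + 1 : ℝ) ≠ 0 := by positivity
  rw [mul_pow, ← pow_mul, mul_comm (_ - 1) 2, pow_mul, Real.sq_sqrt (by simp)]
  push_cast
  rw [add_sub_cancel_right, show (1 : ℝ) - 1 / (k + 1) = k / (k + 1) by field_simp; ring,
    div_pow, pow_succ]
  field_simp
  ring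

theorem ratio_limit (d : ℕ) (hd : 3 ≤ d) :
    Filter.Tendsto
      (fun t : ℝ =>
        ((Real.sqrt ((d : ℝ) - 1) + t) ^ d - (Real.sqrt ((d : ℝ) - 1) - t) ^ d) ^ 2 /
          ((d : ℝ) ^ d * (2 * (1 + t ^ 2) ^ d - 2 * (1 - t ^ 2) ^ d)))
      (nhdsWithin 0 (Set.Ioi 0)) (nhds ((1 - 1 / (d : ℝ)) ^ (d - 1))) := by
  have hnum := (tendsto_add_pow_sub_sub_pow_div √((d : ℝ) - 1) d).mono_left (nhdsGT_le_nhdsNE 0)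
  have hden := (tendsto_add_pow_sub_sub_pow_div (1 : ℝ) d).comp
    ((tendsto_pow_nhdsNE_zero two_ne_zero).mono_left (nhdsGT_le_nhdsNE 0))
  have hlim := (hnum.pow 2).div ((hden.const_mul 2).const_mul ((d : ℝ) ^ d)) (by positivity)
  rw [one_pow, mul_one, sq_two_mul_sqrt_sub_one_pow_div d (by omega)] at hlim
  refine hlim.congr' ?_
  filter_upwards [self_mem_nhdsWithin] with t (ht : 0 < t)
  simp only [Pi.div_apply, Function.comp_apply]
  rw [div_pow, ← mul_div_assoc, ← mul_div_assoc, div_div_div_cancel_right₀ (pow_pos ht 2).ne',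
    mul_sub]
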